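/- arXiv:2211.11834 — 2 statements merged into one kernel-verified Lean document; each statement's English description precedes it below -/
import Mathlib

section
/- Let k be a field (of arbitrary characteristic), let R be a k-algebra, and let M and N be semisimple R-modules finite-dimensional over k with dim_k M = dim_k N. Suppose that for every n ≥ 1 and every tuple r₁, …, rₙ ∈ R, the determinant of X₁·ρ_M(r₁) + ⋯ + Xₙ·ρ_M(rₙ) on M ⊗_k k[X₁,…,Xₙ] equals the determinant of X₁·ρ_N(r₁) + ⋯ + Xₙ·ρ_N(rₙ) on N ⊗_k k[X₁,…,Xₙ]. Then M and N are isomorphic as R-modules. -/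
/-!
Induction on `dim_k M`. Pick a simple submodule `S ⊆ M`. If `Hom_R(S, N) = 0`, the annihilators of
`S` and `N` are comaximal: a maximal left ideal `m` containing both would make `R ⧸ m` isomorphic
to `S` and map it nontrivially to `N`, because `R ⧸ ann W` embeds into `Wⁿ` for finite-dimensional
`W`. Writing `1 = y + z` with `y` killing `S` and `z` killing `N`, we get
`det ρ_M(y) = 0 ≠ 1 = det ρ_N(y)`. So `S` embeds into `N` and a copy of `S` splits off both
modules. Determinant laws are multiplicative on direct sums, and the law of `S` is a nonzero
factor once the tuple is extended by `1 ∈ R`; cancelling it and setting the extra variable to `0`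
shows that the complements have equal laws, so they are isomorphic by induction.
-/

open scoped TensorProduct

/-- The determinant of `X₁·ρ_M(r₁) + ⋯ + Xₙ·ρ_M(rₙ)`, an endomorphism of the finite free
`k[X₁,…,Xₙ]`-module `k[X₁,…,Xₙ] ⊗[k] M`, where `ρ_M(r)` denotes the base change to
`k[X₁,…,Xₙ]` of the `k`-linear action map `m ↦ r • m` of `M`. -/
noncomputable def detOfSMulPoly (k : Type*) {R : Type*} (M : Type*) {n : ℕ} [Field k] [Ring R]
    [Algebra k R] [AddCommGroup M] [Module k M] [Module R M] [IsScalarTower k R M]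
    (r : Fin n → R) : MvPolynomial (Fin n) k :=
  LinearMap.det ((∑ i : Fin n, (MvPolynomial.X i : MvPolynomial (Fin n) k) •
      LinearMap.baseChange (MvPolynomial (Fin n) k) (DistribMulAction.toLinearMap k M (r i)) :
    MvPolynomial (Fin n) k ⊗[k] M →ₗ[MvPolynomial (Fin n) k] MvPolynomial (Fin n) k ⊗[k] M))

open Module LinearMap MvPolynomial

section Annihilator

variable {k R : Type*} [CommRing k] [Ring R] [Algebra k R]
  {W : Type*} [AddCommGroup W] [Module k W] [Module R W] [IsScalarTower k R W]

theorem ker_pi_toSpanSingleton_eq_annihilator {ι : Type*} {s : ι → W}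
    (hs : Submodule.span k (Set.range s) = ⊤) :
    ker (LinearMap.pi fun i ↦ toSpanSingleton R W (s i)) = Module.annihilator R W := by
  ext r
  simp only [mem_ker, Module.mem_annihilator, funext_iff, pi_apply, toSpanSingleton_apply,
    Pi.zero_apply]
  refine ⟨fun hr w ↦ ?_, fun hr i ↦ hr (s i)⟩
  have : DistribSMul.toLinearMap k W r = 0 := ext_on_range hs hr
  exact congr($this w)

theorem exists_quotient_linearMap_ne_zero_of_annihilator_le [Module.Finite k W]
    [IsSemisimpleModule R W] {I : Submodule R R} (hI : I ≠ ⊤)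
    (hle : Module.annihilator R W ≤ I) : ∃ f : (R ⧸ I) →ₗ[R] W, f ≠ 0 := by
  obtain ⟨n, s, hs⟩ := Module.Finite.exists_fin (R := k) (M := W)
  set φ : R →ₗ[R] Fin n → W := LinearMap.pi fun i ↦ toSpanSingleton R W (s i)
  have hker : ker φ ≤ I := ker_pi_toSpanSingleton_eq_annihilator (R := R) hs ▸ hle
  -- `range φ ≃ R ⧸ ker φ` is semisimple, so its quotient `R ⧸ I` lifts back into it.
  obtain ⟨g, hg⟩ := IsSemisimpleModule.lifting_property
    (Submodule.factor hker ∘ₗ φ.quotKerEquivRange.symm.toLinearMap)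
    ((Submodule.factor_surjective hker).comp φ.quotKerEquivRange.symm.surjective) LinearMap.id
  have : Nontrivial (R ⧸ I) := Submodule.Quotient.nontrivial_iff.mpr hI
  obtain ⟨x, hx⟩ := exists_ne (0 : R ⧸ I)
  have hgx : (g x : Fin n → W) ≠ 0 := fun h0 ↦ hx <| by
    simpa [Submodule.coe_eq_zero.mp h0] using congr($hg x).symm
  obtain ⟨i, hi⟩ := Function.ne_iff.mp hgx
  exact ⟨proj i ∘ₗ (range φ).subtype ∘ₗ g, ne_of_apply_ne (· x) hi⟩

theorem annihilator_sup_annihilator_eq_top {S N : Type*}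
    [AddCommGroup S] [Module k S] [Module R S] [IsScalarTower k R S] [Module.Finite k S]
    [IsSimpleModule R S]
    [AddCommGroup N] [Module k N] [Module R N] [IsScalarTower k R N] [Module.Finite k N]
    [IsSemisimpleModule R N]
    (h0 : ∀ f : S →ₗ[R] N, f = 0) : Module.annihilator R S ⊔ Module.annihilator R N = ⊤ := by
  by_contra hne
  obtain ⟨m, hm, hle⟩ := Ideal.exists_le_maximal _ hne
  have : IsSimpleModule R (R ⧸ m) := isSimpleModule_iff_isCoatom.mpr hm.out
  obtain ⟨f, hf⟩ := exists_quotient_linearMap_ne_zero_of_annihilator_le (k := k) (W := S)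
    hm.ne_top (le_sup_left.trans hle)
  obtain ⟨g, hg⟩ := exists_quotient_linearMap_ne_zero_of_annihilator_le (k := k) (W := N)
    hm.ne_top (le_sup_right.trans hle)
  let e := LinearEquiv.ofBijective f (bijective_of_ne_zero hf)
  exact hg <| LinearMap.ext fun x ↦ by simpa using congr($(h0 (g ∘ₗ e.symm.toLinearMap)) (e x))

end Annihilator

section DetOfSMulPoly

variable {k R : Type*} [Field k] [Ring R] [Algebra k R]
  {M N : Type*} [AddCommGroup M] [Module k M] [Module R M] [IsScalarTower k R M]
  [AddCommGroup N] [Module k N] [Module R N] [IsScalarTower k R N]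

instance Submodule.finiteDimensional_of_isScalarTower [FiniteDimensional k M]
    (p : Submodule R M) : FiniteDimensional k p :=
  .of_injective (p.subtype.restrictScalars k) p.injective_subtype

theorem detOfSMulPoly_eq_det_toMatrix {n : ℕ} {ι : Type*} [Fintype ι] [DecidableEq ι]
    (b : Basis ι k M) (r : Fin n → R) :
    detOfSMulPoly k M r = (∑ i, (X i : MvPolynomial (Fin n) k) •
      (toMatrix b b (DistribSMul.toLinearMap k M (r i))).map (algebraMap k _)).det := by
  rw [detOfSMulPoly, ← det_toMatrix (Algebra.TensorProduct.basis _ b), map_sum]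
  simp only [LinearEquiv.map_smul, toMatrix_baseChange]
  rfl

theorem aeval_detOfSMulPoly {n : ℕ} {ι : Type*} [Fintype ι] [DecidableEq ι]
    {B : Type*} [CommRing B] [Algebra k B] (b : Basis ι k M) (r : Fin n → R) (v : Fin n → B) :
    aeval v (detOfSMulPoly k M r) =
      (∑ i, v i • (toMatrix b b (DistribSMul.toLinearMap k M (r i))).map (algebraMap k B)).det := by
  rw [detOfSMulPoly_eq_det_toMatrix b, AlgHom.map_det]
  congr 1
  ext
  simp [Matrix.sum_apply, algebraMap_eq]

theorem eval_detOfSMulPoly [FiniteDimensional k M] {n : ℕ} (r : Fin n → R) (v : Fin n → k) :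
    eval v (detOfSMulPoly k M r) =
      LinearMap.det (DistribSMul.toLinearMap k M (∑ i, v i • r i)) := by
  let b := finBasis k M
  rw [← coe_aeval_eq_eval, RingHom.coe_coe, aeval_detOfSMulPoly b, ← det_toMatrix b]
  congr 1
  ext
  simp [Matrix.sum_apply, toMatrix_apply, Finset.sum_smul, smul_assoc]

theorem detOfSMulPoly_snoc_one_ne_zero [FiniteDimensional k M] {n : ℕ} (r : Fin n → R) :
    detOfSMulPoly k M (Fin.snoc r 1) ≠ 0 := by
  intro h0
  have := eval_detOfSMulPoly (k := k) (M := M) (Fin.snoc r 1) (Fin.snoc 0 1)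
  have hone : DistribSMul.toLinearMap k M (1 : R) = LinearMap.id := by ext; simp
  simp [h0, Fin.sum_univ_castSucc, hone] at this

theorem aeval_snoc_X_zero_detOfSMulPoly_snoc [FiniteDimensional k M] {n : ℕ} (r : Fin n → R)
    (s : R) : aeval (Fin.snoc X 0) (detOfSMulPoly k M (Fin.snoc r s)) = detOfSMulPoly k M r := by
  rw [aeval_detOfSMulPoly (finBasis k M), detOfSMulPoly_eq_det_toMatrix (finBasis k M),
    Fin.sum_univ_castSucc]
  simp

theorem detOfSMulPoly_congr [FiniteDimensional k M] (e : M ≃ₗ[R] N) {n : ℕ} (r : Fin n → R) :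
    detOfSMulPoly k M r = detOfSMulPoly k N r := by
  let b := finBasis k M
  have hconj : ∀ s : R, DistribSMul.toLinearMap k N s =
      (e.restrictScalars k).conj (DistribSMul.toLinearMap k M s) := fun s ↦ by
    ext x; simp [LinearEquiv.conj_apply]
  rw [detOfSMulPoly_eq_det_toMatrix b, detOfSMulPoly_eq_det_toMatrix (b.map (e.restrictScalars k))]
  simp_rw [hconj]
  congr 3 with i
  simp [LinearMap.toMatrix_apply]

theorem detOfSMulPoly_prod [FiniteDimensional k M] [FiniteDimensional k N] {n : ℕ}
    (r : Fin n → R) :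
    detOfSMulPoly k (M × N) r = detOfSMulPoly k M r * detOfSMulPoly k N r := by
  let b := finBasis k M
  let c := finBasis k N
  rw [detOfSMulPoly_eq_det_toMatrix (b.prod c), detOfSMulPoly_eq_det_toMatrix b,
    detOfSMulPoly_eq_det_toMatrix c, ← Matrix.det_fromBlocks_zero₂₁ _ 0]
  congr 1
  ext (i | i) (j | j) <;> simp [Matrix.sum_apply, toMatrix_apply]

theorem detOfSMulPoly_eq_of_detOfSMulPoly_prod_eq {S : Type*} [AddCommGroup S] [Module k S]
    [Module R S] [IsScalarTower k R S] [FiniteDimensional k S] [FiniteDimensional k M]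
    [FiniteDimensional k N] {n : ℕ}
    (h : ∀ s : Fin (n + 1) → R, detOfSMulPoly k (S × M) s = detOfSMulPoly k (S × N) s)
    (r : Fin n → R) : detOfSMulPoly k M r = detOfSMulPoly k N r := by
  have hcancel := h (Fin.snoc r 1)
  rw [detOfSMulPoly_prod, detOfSMulPoly_prod] at hcancel
  rw [← aeval_snoc_X_zero_detOfSMulPoly_snoc r 1,
    ← aeval_snoc_X_zero_detOfSMulPoly_snoc (M := N) r 1,
    mul_left_cancel₀ (detOfSMulPoly_snoc_one_ne_zero r) hcancel]

end DetOfSMulPoly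

section Isomorphism

variable {k R : Type*} [Field k] [Ring R] [Algebra k R]
  {M N : Type*} [AddCommGroup M] [Module k M] [Module R M] [IsScalarTower k R M]
  [FiniteDimensional k M] [AddCommGroup N] [Module k N] [Module R N] [IsScalarTower k R N]
  [FiniteDimensional k N] [IsSemisimpleModule R N]

theorem exists_linearMap_ne_zero_of_detOfSMulPoly_eq (S : Submodule R M) [IsSimpleModule R S]
    (h : ∀ r : Fin 1 → R, detOfSMulPoly k M r = detOfSMulPoly k N r) :
    ∃ f : S →ₗ[R] N, f ≠ 0 := by
  by_contra! h0
  obtain ⟨y, hyS, z, hzN, hyz⟩ := Submodule.mem_sup.mp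
    (annihilator_sup_annihilator_eq_top (k := k) h0 ▸ Submodule.mem_top : (1 : R) ∈ _)
  have hM : LinearMap.det (DistribSMul.toLinearMap k M y) = 0 := by
    have := IsSimpleModule.nontrivial R S
    obtain ⟨s, hs⟩ := exists_ne (0 : S)
    refine det_eq_zero_iff_ker_ne_bot.mpr ((ker _).ne_bot_iff.mpr ⟨s, ?_, by simpa using hs⟩)
    simpa using congr_arg Subtype.val (Module.mem_annihilator.mp hyS s)
  have hN : DistribSMul.toLinearMap k N y = LinearMap.id := by
    ext x
    simpa [add_smul, Module.mem_annihilator.mp hzN x] using congr_arg (· • x) hyz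
  have := congr_arg (eval 1) (h ![y])
  simp [eval_detOfSMulPoly, hM, hN] at this

theorem subsingleton_of_detOfSMulPoly_eq [Subsingleton M] [IsSemisimpleModule R M]
    (h : ∀ r : Fin 1 → R, detOfSMulPoly k M r = detOfSMulPoly k N r) : Subsingleton N := by
  by_contra hN
  have := not_subsingleton_iff_nontrivial.mp hN
  obtain ⟨S, _⟩ := IsSemisimpleModule.exists_simple_submodule R N
  obtain ⟨f, hf⟩ := exists_linearMap_ne_zero_of_detOfSMulPoly_eq S fun r ↦ (h r).symm
  exact hf (Subsingleton.elim _ _)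

end Isomorphism

theorem linearEquiv_of_det_eq_of_isSemisimple_general (k R M N : Type*) [Field k] [Ring R] [Algebra k R]
    [AddCommGroup M] [Module k M] [Module R M] [IsScalarTower k R M] [FiniteDimensional k M]
    [AddCommGroup N] [Module k N] [Module R N] [IsScalarTower k R N] [FiniteDimensional k N]
    [IsSemisimpleModule R M] [IsSemisimpleModule R N]
    (h : ∀ (n : ℕ), 1 ≤ n → ∀ r : Fin n → R, detOfSMulPoly k M r = detOfSMulPoly k N r) :
    Nonempty (M ≃ₗ[R] N) := by
  induction hd : finrank k M using Nat.strong_induction_on generalizing M N with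
  | _ d ih =>
  rcases subsingleton_or_nontrivial M with hM | hM
  · have := subsingleton_of_detOfSMulPoly_eq (h 1 le_rfl)
    exact ⟨.ofSubsingleton M N⟩
  obtain ⟨S, _⟩ := IsSemisimpleModule.exists_simple_submodule R M
  obtain ⟨f, hf⟩ := exists_linearMap_ne_zero_of_detOfSMulPoly_eq S (h 1 le_rfl)
  obtain ⟨M', hM'⟩ := exists_isCompl S
  obtain ⟨N', hN'⟩ := exists_isCompl (range f)
  let eM := S.prodEquivOfIsCompl M' hM'
  let eN := (LinearEquiv.ofInjective f (injective_of_ne_zero hf)).prodCongr (.refl R N') ≪≫ₗ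
    (range f).prodEquivOfIsCompl N' hN'
  have hlt : finrank k M' < d := by
    have := IsSimpleModule.nontrivial R S
    rw [← hd, ← (eM.restrictScalars k).finrank_eq, finrank_prod]
    exact Nat.lt_add_of_pos_left finrank_pos
  have h' (n : ℕ) (_ : 1 ≤ n) (r : Fin n → R) : detOfSMulPoly k M' r = detOfSMulPoly k N' r :=
    detOfSMulPoly_eq_of_detOfSMulPoly_prod_eq (S := S) (fun s ↦ by
      rw [detOfSMulPoly_congr eM, detOfSMulPoly_congr eN]
      exact h _ n.succ_pos s) r
  obtain ⟨g⟩ := ih _ hlt M' N' h' rfl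
  exact ⟨eM.symm ≪≫ₗ (LinearEquiv.refl R S).prodCongr g ≪≫ₗ eN⟩

/-- Two semisimple `R`-modules of the same finite `k`-dimension with equal
determinant polynomial laws are isomorphic. -/
theorem linearEquiv_of_det_eq_of_isSemisimple (k R M N : Type*) [Field k] [Ring R] [Algebra k R]
    [AddCommGroup M] [Module k M] [Module R M] [IsScalarTower k R M] [FiniteDimensional k M]
    [AddCommGroup N] [Module k N] [Module R N] [IsScalarTower k R N] [FiniteDimensional k N]
    [IsSemisimpleModule R M] [IsSemisimpleModule R N]
    (hdim : Module.finrank k M = Module.finrank k N)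
    (h : ∀ (n : ℕ), 1 ≤ n → ∀ r : Fin n → R, detOfSMulPoly k M r = detOfSMulPoly k N r) :
    Nonempty (M ≃ₗ[R] N) :=
  linearEquiv_of_det_eq_of_isSemisimple_general k R M N h
end

section
/- Let k be a field and let R be a k-algebra. If M and N are simple R-modules, each finite-dimensional as a k-vector space, whose annihilators in R coincide (that is, {r ∈ R : r • m = 0 for all m ∈ M} = {r ∈ R : r • n = 0 for all n ∈ N}), then M and N are isomorphic as R-modules. -/
/-!
If `v` spans `M` over `k`, then `r ↦ (r • v i)ᵢ` embeds `R ⧸ Ann(M)` into the finite power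
`ι → M`, which is semisimple when `M` is simple. A simple `N` with `Ann(M) ≤ Ann(N)` is a quotient
of `R ⧸ Ann(N)`, hence of `R ⧸ Ann(M)`; by semisimplicity the surjection extends to a nonzero map
`(ι → M) → N`, one of whose components is a nonzero map `M → N`, an isomorphism by Schur's lemma.
-/

open LinearMap

theorem Module.annihilator_eq_ker_pi_toSpanSingleton {k R M ι : Type*} [CommSemiring k]
    [Semiring R] [Algebra k R] [AddCommMonoid M] [Module k M] [Module R M] [IsScalarTower k R M]
    {v : ι → M} (hv : Submodule.span k (Set.range v) = ⊤) :
    Module.annihilator R M = ker (LinearMap.pi fun i ↦ toSpanSingleton R M (v i)) := by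
  ext r
  simp only [mem_annihilator, mem_ker, funext_iff, pi_apply, toSpanSingleton_apply,
    Pi.zero_apply]
  refine ⟨fun hr i ↦ hr (v i), fun hr ↦ ?_⟩
  have : Algebra.lsmul k k M r = 0 := ext_on_range hv hr
  exact fun m ↦ congr($this m)

theorem LinearMap.exists_comp_eq_of_ker_le {R A B P : Type*} [Ring R] [AddCommGroup A]
    [Module R A] [AddCommGroup B] [Module R B] [IsSemisimpleModule R B] [AddCommGroup P]
    [Module R P] (ψ : A →ₗ[R] B) (φ : A →ₗ[R] P) (h : ker ψ ≤ ker φ) :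
    ∃ F : B →ₗ[R] P, F ∘ₗ ψ = φ := by
  let g : range ψ →ₗ[R] P := (ker ψ).liftQ φ h ∘ₗ ψ.quotKerEquivRange.symm.toLinearMap
  obtain ⟨F, hF⟩ := IsSemisimpleModule.extension_property _ (range ψ).subtype_injective g
  refine ⟨F, ext fun a ↦ ?_⟩
  simpa [g] using congr($hF ⟨ψ a, mem_range_self ψ a⟩)

theorem IsSimpleModule.nonempty_linearEquiv_of_pi_ne_zero {R M N ι : Type*} [Ring R]
    [AddCommGroup M] [Module R M] [IsSimpleModule R M] [AddCommGroup N] [Module R N]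
    [IsSimpleModule R N] [Finite ι] {F : (ι → M) →ₗ[R] N} (hF : F ≠ 0) :
    Nonempty (M ≃ₗ[R] N) := by
  classical
  obtain ⟨i, hi⟩ : ∃ i, F ∘ₗ single R (fun _ ↦ M) i ≠ 0 := by
    by_contra! h
    exact hF (pi_ext' fun i ↦ by rw [h i, zero_comp])
  exact ⟨.ofBijective _ (bijective_of_ne_zero hi)⟩

theorem IsSimpleModule.nonempty_linearEquiv_of_annihilator_le (k : Type*) {R M N : Type*}
    [CommSemiring k] [Ring R] [Algebra k R] [AddCommGroup M] [Module k M] [Module R M]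
    [IsScalarTower k R M] [Module.Finite k M] [IsSimpleModule R M] [AddCommGroup N] [Module R N]
    [IsSimpleModule R N] (hle : Module.annihilator R M ≤ Module.annihilator R N) :
    Nonempty (M ≃ₗ[R] N) := by
  obtain ⟨n, v, hv⟩ := Module.Finite.exists_fin (R := k) (M := M)
  have := IsSimpleModule.nontrivial R N
  obtain ⟨x, hx⟩ := exists_ne (0 : N)
  have hker : ker (LinearMap.pi fun i ↦ toSpanSingleton R M (v i)) ≤
      ker (toSpanSingleton R N x) := by
    rw [← Module.annihilator_eq_ker_pi_toSpanSingleton hv]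
    exact fun r hr ↦ Module.mem_annihilator.mp (hle hr) x
  obtain ⟨F, hF⟩ := exists_comp_eq_of_ker_le _ _ hker
  refine nonempty_linearEquiv_of_pi_ne_zero (F := F) ?_
  rintro rfl
  exact hx (by simpa using congr($hF 1).symm)

theorem linearEquiv_of_annihilator_eq_general (k R M N : Type*) [Field k] [Ring R] [Algebra k R]
    [AddCommGroup M] [Module k M] [Module R M] [IsScalarTower k R M] [FiniteDimensional k M]
    [AddCommGroup N] [Module R N]
    [IsSimpleModule R M] [IsSimpleModule R N]
    (h : {r : R | ∀ m : M, r • m = 0} = {r : R | ∀ x : N, r • x = 0}) :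
    Nonempty (M ≃ₗ[R] N) :=
  IsSimpleModule.nonempty_linearEquiv_of_annihilator_le k fun r hr ↦
    Module.mem_annihilator.mpr <| (Set.ext_iff.mp h r).mp (Module.mem_annihilator.mp hr)

/-- Two simple modules over a `k`-algebra `R`, each finite-dimensional over
`k`, with equal annihilators are isomorphic. -/
theorem linearEquiv_of_annihilator_eq (k R M N : Type*) [Field k] [Ring R] [Algebra k R]
    [AddCommGroup M] [Module k M] [Module R M] [IsScalarTower k R M] [FiniteDimensional k M]
    [AddCommGroup N] [Module k N] [Module R N] [IsScalarTower k R N] [FiniteDimensional k N]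
    [IsSimpleModule R M] [IsSimpleModule R N]
    (h : {r : R | ∀ m : M, r • m = 0} = {r : R | ∀ x : N, r • x = 0}) :
    Nonempty (M ≃ₗ[R] N) :=
  linearEquiv_of_annihilator_eq_general k R M N h
end
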